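/- Predictive error relationship for the Arthurs–Kelly process: for every unit vector Ψ in E, ‖ε_Xf Ψ‖ · ‖ε_Pf Ψ‖ ≥ ħ/2. -/

import Mathlib

open scoped ComplexInnerProductSpace

noncomputable section

variable {E : Type*} [NormedAddCommGroup E] [InnerProductSpace ℂ E]

/-- The commutator of two operators. -/
def commOp (A B : E →ₗ[ℂ] E) : E →ₗ[ℂ] E := A ∘ₗ B - B ∘ₗ A

/-- Final Heisenberg-picture position: `x_f = x + πP`. -/
def xf (x piP : E →ₗ[ℂ] E) : E →ₗ[ℂ] E := x + piP

/-- Final Heisenberg-picture momentum: `p_f = p − πX`. -/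
def pf (p piX : E →ₗ[ℂ] E) : E →ₗ[ℂ] E := p - piX

/-- Final X-pointer observable: `μXf = μX + x + (1/2) • πP`. -/
def muXf (muX x piP : E →ₗ[ℂ] E) : E →ₗ[ℂ] E := muX + x + (1 / 2 : ℂ) • piP

/-- Final P-pointer observable: `μPf = μP + p − (1/2) • πX`. -/
def muPf (muP p piX : E →ₗ[ℂ] E) : E →ₗ[ℂ] E := muP + p - (1 / 2 : ℂ) • piX

/-- Retrodictive X error operator: `ε_Xi = μXf − x`. -/
def epsXi (muX x piP : E →ₗ[ℂ] E) : E →ₗ[ℂ] E := muXf muX x piP - x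

/-- Retrodictive P error operator: `ε_Pi = μPf − p`. -/
def epsPi (muP p piX : E →ₗ[ℂ] E) : E →ₗ[ℂ] E := muPf muP p piX - p

/-- Predictive X error operator: `ε_Xf = μXf − x_f`. -/
def epsXf (muX x piP : E →ₗ[ℂ] E) : E →ₗ[ℂ] E := muXf muX x piP - xf x piP

/-- Predictive P error operator: `ε_Pf = μPf − p_f`. -/
def epsPf (muP p piX : E →ₗ[ℂ] E) : E →ₗ[ℂ] E := muPf muP p piX - pf p piX

/-- X disturbance operator: `δ_X = x_f − x`. -/
def deltaX (x piP : E →ₗ[ℂ] E) : E →ₗ[ℂ] E := xf x piP - x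

/-- P disturbance operator: `δ_P = p_f − p`. -/
def deltaP (p piX : E →ₗ[ℂ] E) : E →ₗ[ℂ] E := pf p piX - p


lemma commOp_swap (A B : E →ₗ[ℂ] E) : commOp A B = - commOp B A := by
  unfold commOp; abel

lemma commOp_sub_left (A B C : E →ₗ[ℂ] E) :
    commOp (A - B) C = commOp A C - commOp B C := by
  ext v; simp [commOp, map_sub]; abel

lemma commOp_add_right (A B C : E →ₗ[ℂ] E) :
    commOp A (B + C) = commOp A B + commOp A C := by
  ext v; simp [commOp, map_add]; abel

lemma commOp_smul_left (c : ℂ) (A B : E →ₗ[ℂ] E) :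
    commOp (c • A) B = c • commOp A B := by
  ext v; simp [commOp, map_smul, smul_sub]

lemma commOp_smul_right (c : ℂ) (A B : E →ₗ[ℂ] E) :
    commOp A (c • B) = c • commOp A B := by
  ext v; simp [commOp, map_smul, smul_sub]

/-- Predictive error relationship for the Arthurs–Kelly process. -/
theorem arthurs_kelly_predictive_error_relation
    (hbar : ℝ) (hhbar : 0 < hbar)
    (x p muX piX muP piP : E →ₗ[ℂ] E)
    (hx : x.IsSymmetric) (hp : p.IsSymmetric)
    (hmuX : muX.IsSymmetric) (hpiX : piX.IsSymmetric)
    (hmuP : muP.IsSymmetric) (hpiP : piP.IsSymmetric)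
    (hxp : commOp x p = (Complex.I * (hbar : ℂ)) • (LinearMap.id : E →ₗ[ℂ] E))
    (hmuXpiX : commOp muX piX = (Complex.I * (hbar : ℂ)) • (LinearMap.id : E →ₗ[ℂ] E))
    (hmuPpiP : commOp muP piP = (Complex.I * (hbar : ℂ)) • (LinearMap.id : E →ₗ[ℂ] E))
    (hxmuX : commOp x muX = 0) (hxpiX : commOp x piX = 0)
    (hxmuP : commOp x muP = 0) (hxpiP : commOp x piP = 0)
    (hpmuX : commOp p muX = 0) (hppiX : commOp p piX = 0)
    (hpmuP : commOp p muP = 0) (hppiP : commOp p piP = 0)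
    (hmuXmuP : commOp muX muP = 0) (hmuXpiP : commOp muX piP = 0)
    (hpiXmuP : commOp piX muP = 0) (hpiXpiP : commOp piX piP = 0)
    (Ψ : E) (hΨ : ‖Ψ‖ = 1) :
    hbar / 2 ≤ ‖epsXf muX x piP Ψ‖ * ‖epsPf muP p piX Ψ‖ := by

  set A := epsXf muX x piP with hAdef
  set B := epsPf muP p piX with hBdef
  have hAeq : A = muX - (2⁻¹ : ℂ) • piP := by
    ext v
    simp [hAdef, epsXf, muXf, xf]
    module
  have hBeq : B = muP + (2⁻¹ : ℂ) • piX := by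
    ext v
    simp [hBdef, epsPf, muPf, pf]
    module
  have hA : A.IsSymmetric := by
    rw [hAeq]
    intro u v
    simp [inner_sub_left, inner_sub_right, inner_smul_left, inner_smul_right,
      hmuX u v, hpiP u v, map_ofNat]
  have hB : B.IsSymmetric := by
    rw [hBeq]
    intro u v
    simp [inner_add_left, inner_add_right, inner_smul_left, inner_smul_right,
      hmuP u v, hpiX u v, map_ofNat]
  have hcomm : commOp A B = (Complex.I * (hbar : ℂ)) • (LinearMap.id : E →ₗ[ℂ] E) := by
    rw [hAeq, hBeq]
    simp only [commOp_sub_left, commOp_add_right, commOp_smul_left, commOp_smul_right]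
    rw [commOp_swap piP muP, commOp_swap piP piX,
      hmuXmuP, hmuXpiX, hmuPpiP, hpiXpiP]
    ext v
    simp
    module
  have key : ⟪A Ψ, B Ψ⟫ - ⟪B Ψ, A Ψ⟫ = Complex.I * (hbar : ℂ) := by
    rw [hA (Ψ) (B Ψ), hB (Ψ) (A Ψ)]
    have : ⟪Ψ, A (B Ψ)⟫ - ⟪Ψ, B (A Ψ)⟫ = ⟪Ψ, (commOp A B) Ψ⟫ := by
      simp [commOp, inner_sub_right]
    rw [this, hcomm]
    simp [inner_smul_right, inner_self_eq_norm_sq_to_K, hΨ]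
  have h1 : (hbar : ℝ) = ‖⟪A Ψ, B Ψ⟫ - ⟪B Ψ, A Ψ⟫‖ := by
    rw [key]
    simp [norm_mul, Complex.norm_I, Complex.norm_real, abs_of_pos hhbar]
  have h2 : ‖⟪A Ψ, B Ψ⟫ - ⟪B Ψ, A Ψ⟫‖ ≤ ‖⟪A Ψ, B Ψ⟫‖ + ‖⟪B Ψ, A Ψ⟫‖ :=
    norm_sub_le _ _
  have h3 : ‖⟪B Ψ, A Ψ⟫‖ = ‖⟪A Ψ, B Ψ⟫‖ := by
    rw [← inner_conj_symm (A Ψ) (B Ψ), RCLike.norm_conj]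
  have h4 : ‖⟪A Ψ, B Ψ⟫‖ ≤ ‖A Ψ‖ * ‖B Ψ‖ := norm_inner_le_norm _ _
  linarith


end
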